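/- Let r be a positive integer and n ∈ B_r with n > 1, and let η(n) be the exponent of the largest prime divisor P_1(n) in the factorization of n. If n is a sparsely Schemmel totient number of order r, then P_1(n)^(η(n)−1) < 4·(J_r/r)·P_1(n)^2; in particular, if P_1(n)^4 | n then P_1(n) < 4·J_r/r. -/

import Mathlib

/-- The Schemmel totient function of order `r` (multiplicative, with
`S r (p^a) = p^(a-1) * (p - r)`; note `p - r = 0` in `ℕ` when `p ≤ r`). -/
def S (r n : ℕ) : ℕ := ∏ q ∈ n.primeFactors, q ^ (n.factorization q - 1) * (q - r)

/-- `b r` is the number of primes `≤ r`. -/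
def b (r : ℕ) : ℕ := ((Finset.range (r + 1)).filter Nat.Prime).card

/-- `p i` is the `i`-th prime (`p 1 = 2`, `p 2 = 3`, ...). -/
noncomputable def p (i : ℕ) : ℕ := Nat.nth Nat.Prime (i - 1)

/-- `n` is a sparsely Schemmel totient number of order `r`. -/
def SST (r n : ℕ) : Prop := 0 < S r n ∧ ∀ m : ℕ, n < m → 0 < S r m → S r n < S r m

/-- Jacobsthal function: the smallest `a` such that every `a` consecutive
integers contain one coprime to `N`. -/
noncomputable def J (N : ℕ) : ℕ := sInf {a : ℕ | ∀ x : ℕ, ∃ y ∈ Finset.Ico x (x + a), Nat.Coprime y N}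

/-- `Pk k n` is the `k`-th largest prime divisor of `n` (or `0` if `ω(n) < k`). -/
def Pk (k n : ℕ) : ℕ := ((n.primeFactors.sort (· ≤ ·)).reverse).getD (k - 1) 0

/-- `Qk r k n` is the `k`-th smallest prime greater than `r` not dividing `n`. -/
noncomputable def Qk (r k n : ℕ) : ℕ := Nat.nth (fun q : ℕ => q.Prime ∧ r < q ∧ ¬ q ∣ n) (k - 1)

/-- `Rn n` is `n` divided by the product of its distinct prime factors. -/
def Rn (n : ℕ) : ℕ := n / ∏ q ∈ n.primeFactors, q

/-!
Write `n = R(n) · rad n`, so that `S_r(n) = R(n) · ∏_{q ∣ n} (q - r)`. For a prime `Q > r` not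
dividing `n`, and `t` coprime to `r#` just above `R(n) / Q` (a Jacobsthal window of length `J_r`
provides one), the number `m = rad n · Q · t` exceeds `n`, has no prime factor `≤ r`, and
`S_r(m) ≤ ∏_{q ∣ n} (q - r) · (Q - r) · t`. Sparseness forces `S_r(n) < S_r(m)`, whence
`R(n) < (Q - r) t` and then `r R(n) < (Q - r) J_r Q`. Taking `Q ∈ (P_1(n), 2 P_1(n)]` by Bertrand
and using `P_1(n)^(η(n) - 1) ∣ R(n)` gives the bound.
-/
open Finset

section Schemmel

variable {r : ℕ}

def schemmelFactor (r q k : ℕ) : ℕ := if k = 0 then 1 else q ^ (k - 1) * (q - r)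

lemma S_eq_prod_schemmelFactor {n : ℕ} {U : Finset ℕ} (hU : n.primeFactors ⊆ U) :
    S r n = ∏ q ∈ U, schemmelFactor r q (n.factorization q) := by
  rw [S, ← prod_subset hU fun q _ hq => by
    rw [schemmelFactor, if_pos (Finsupp.notMem_support_iff.1 hq)]]
  exact prod_congr rfl fun q hq => by rw [schemmelFactor, if_neg (Finsupp.mem_support_iff.1 hq)]

lemma schemmelFactor_add_le (r q a b : ℕ) :
    schemmelFactor r q (a + b) ≤ schemmelFactor r q a * q ^ b := by
  rcases Nat.eq_zero_or_pos a with rfl | ha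
  · rcases Nat.eq_zero_or_pos b with rfl | hb
    · simp [schemmelFactor]
    · simp only [schemmelFactor, zero_add, hb.ne', if_false, if_true, one_mul]
      calc q ^ (b - 1) * (q - r) ≤ q ^ (b - 1) * q := Nat.mul_le_mul_left _ (Nat.sub_le q r)
        _ = q ^ b := pow_sub_one_mul hb.ne' q
  · simp only [schemmelFactor, ha.ne', (Nat.add_pos_left ha b).ne', if_false]
    rw [show a + b - 1 = a - 1 + b by omega, pow_add]
    exact (mul_right_comm _ _ _).le

lemma prod_pow_factorization_of_subset {t : ℕ} {U : Finset ℕ} (ht : t ≠ 0)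
    (hU : t.primeFactors ⊆ U) : ∏ q ∈ U, q ^ t.factorization q = t := by
  rw [← Finsupp.prod_of_support_subset _ (by rwa [Nat.support_factorization]) _
    fun _ _ => pow_zero _]
  exact Nat.prod_factorization_pow_eq_self ht

lemma S_mul_le {m t : ℕ} (hm : m ≠ 0) (ht : t ≠ 0) : S r (m * t) ≤ S r m * t := by
  have hmt : m * t ≠ 0 := mul_ne_zero hm ht
  set U := (m * t).primeFactors
  calc S r (m * t) = ∏ q ∈ U, schemmelFactor r q (m.factorization q + t.factorization q) := by
        rw [S_eq_prod_schemmelFactor subset_rfl, Nat.factorization_mul hm ht]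
        rfl
    _ ≤ ∏ q ∈ U, schemmelFactor r q (m.factorization q) * q ^ t.factorization q :=
        prod_le_prod' fun q _ => schemmelFactor_add_le r q _ _
    _ = S r m * t := by
        rw [prod_mul_distrib,
          ← S_eq_prod_schemmelFactor (Nat.primeFactors_mono (dvd_mul_right m t) hmt),
          prod_pow_factorization_of_subset ht (Nat.primeFactors_mono (dvd_mul_left t m) hmt)]

lemma S_prod_primes {A : Finset ℕ} (hA : ∀ q ∈ A, q.Prime) :
    S r (∏ q ∈ A, q) = ∏ q ∈ A, (q - r) := by
  rw [S, Nat.primeFactors_prod hA]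
  refine prod_congr rfl fun q hq => ?_
  rw [Nat.factorization_prod fun x hx => (hA x hx).ne_zero, Finsupp.finsetSum_apply,
    sum_congr rfl fun x hx => by rw [(hA x hx).factorization, Finsupp.single_apply]]
  simp [hq]

lemma S_pos_iff {n : ℕ} : 0 < S r n ↔ ∀ q ∈ n.primeFactors, r < q := by
  rw [S, CanonicallyOrderedAdd.prod_pos]
  refine forall₂_congr fun q hq => ?_
  simp [Nat.pos_of_mem_primeFactors hq]

lemma Rn_mul_prod_primeFactors (n : ℕ) : Rn n * ∏ q ∈ n.primeFactors, q = n :=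
  Nat.div_mul_cancel (Nat.prod_primeFactors_dvd n)

lemma prod_pow_factorization_sub_one_eq_Rn {n : ℕ} (hn : n ≠ 0) :
    ∏ q ∈ n.primeFactors, q ^ (n.factorization q - 1) = Rn n := by
  refine (Nat.div_eq_of_eq_mul_left (prod_pos fun q hq => Nat.pos_of_mem_primeFactors hq) ?_).symm
  conv_lhs => rw [← prod_pow_factorization_of_subset hn subset_rfl]
  rw [← prod_mul_distrib]
  exact prod_congr rfl fun q hq => (pow_sub_one_mul (Finsupp.mem_support_iff.1 hq) q).symm

lemma S_eq_Rn_mul {n : ℕ} (hn : n ≠ 0) :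
    S r n = Rn n * ∏ q ∈ n.primeFactors, (q - r) := by
  rw [S, prod_mul_distrib, prod_pow_factorization_sub_one_eq_Rn hn]

lemma pow_factorization_sub_one_dvd_Rn {n q : ℕ} (hn : n ≠ 0) (hq : q ∈ n.primeFactors) :
    q ^ (n.factorization q - 1) ∣ Rn n := by
  rw [← prod_pow_factorization_sub_one_eq_Rn hn]
  exact dvd_prod_of_mem _ hq

end Schemmel

lemma exists_coprime_mem_Ico_J {N : ℕ} (hN : N ≠ 0) (x : ℕ) :
    ∃ y ∈ Ico x (x + J N), y.Coprime N := by
  refine Nat.sInf_mem (s := {a | ∀ x, ∃ y ∈ Ico x (x + a), y.Coprime N}) ⟨N + 2, fun x => ?_⟩ x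
  refine ⟨N * (x / N + 1) + 1, ?_, by simp⟩
  have := Nat.div_add_mod x N
  have := Nat.mod_lt x (Nat.pos_of_ne_zero hN)
  rw [mem_Ico, mul_add, mul_one]
  omega

lemma lt_of_mem_primeFactors_of_coprime_primorial {r t q : ℕ} (ht : t.Coprime (primorial r))
    (hq : q ∈ t.primeFactors) : r < q := by
  have hq' := Nat.prime_of_mem_primeFactors hq
  by_contra! hqr
  exact hq'.one_lt.ne' <| Nat.eq_one_of_dvd_coprimes ht (Nat.dvd_of_mem_primeFactors hq)
    (hq'.dvd_primorial_iff.2 hqr)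

lemma Pk_one_eq_max' {n : ℕ} (hn : 1 < n) :
    Pk 1 n = n.primeFactors.max' (Nat.nonempty_primeFactors.2 hn) := by
  have hlen : 0 < (n.primeFactors.sort (· ≤ ·)).length := by
    rw [length_sort]
    exact card_pos.2 (Nat.nonempty_primeFactors.2 hn)
  rw [Pk, List.getD_eq_getElem _ _ (by simpa using hlen), List.getElem_reverse]
  exact sorted_last_eq_max'_aux _ (by simpa using hlen) _

lemma Pk_one_mem_primeFactors {n : ℕ} (hn : 1 < n) : Pk 1 n ∈ n.primeFactors :=
  Pk_one_eq_max' hn ▸ max'_mem _ _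

lemma mul_lt_of_lt_mul_of_le_div_add {R Q r J t : ℕ} (hrQ : r ≤ Q) (hR : R < (Q - r) * t)
    (ht : t ≤ R / Q + J) : r * R < (Q - r) * J * Q := by
  obtain ⟨s, rfl⟩ := Nat.exists_eq_add_of_le hrQ
  simp only [Nat.add_sub_cancel_left] at hR ⊢
  have hQ : 0 < r + s := by nlinarith
  refine lt_of_add_lt_add_right (a := s * R) ?_
  calc r * R + s * R = R * (r + s) := by ring
    _ < s * t * (r + s) := Nat.mul_lt_mul_of_pos_right hR hQ
    _ ≤ s * (R / (r + s) + J) * (r + s) := by gcongr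
    _ = s * (R / (r + s) * (r + s)) + s * J * (r + s) := by ring
    _ ≤ s * R + s * J * (r + s) := by gcongr; exact Nat.div_mul_le_self R (r + s)
    _ = s * J * (r + s) + s * R := add_comm _ _

theorem SST.mul_Rn_lt {r n Q : ℕ} (h : SST r n) (hn : n ≠ 0) (hQ : Q.Prime) (hrQ : r < Q)
    (hQn : Q ∉ n.primeFactors) : r * Rn n < (Q - r) * J (primorial r) * Q := by
  obtain ⟨t, ht, htr⟩ := exists_coprime_mem_Ico_J (primorial_pos r).ne' (Rn n / Q + 1)
  obtain ⟨htD, htJ⟩ := mem_Ico.1 ht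
  have ht0 : t ≠ 0 := ((Nat.succ_pos _).trans_le htD).ne'
  set A := insert Q n.primeFactors
  have hA : ∀ q ∈ A, q.Prime := by
    simpa [A, hQ] using fun q hq => Nat.prime_of_mem_primeFactors hq
  have hA0 : ∏ q ∈ A, q ≠ 0 := prod_ne_zero_iff.2 fun q hq => (hA q hq).ne_zero
  have hnm : n < (∏ q ∈ A, q) * t := by
    have hRt : Rn n < t * Q := (Nat.div_lt_iff_lt_mul hQ.pos).1 htD
    calc n = Rn n * ∏ q ∈ n.primeFactors, q := (Rn_mul_prod_primeFactors n).symm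
      _ < t * Q * ∏ q ∈ n.primeFactors, q :=
        Nat.mul_lt_mul_of_pos_right hRt (prod_pos fun q hq => Nat.pos_of_mem_primeFactors hq)
      _ = (∏ q ∈ A, q) * t := by rw [prod_insert hQn]; ring
  have hSm : 0 < S r ((∏ q ∈ A, q) * t) := by
    rw [S_pos_iff, Nat.primeFactors_mul hA0 ht0, Nat.primeFactors_prod hA]
    intro q hq
    rcases mem_union.1 hq with hq | hq
    · rcases mem_insert.1 hq with rfl | hq
      · exact hrQ
      · exact S_pos_iff.1 h.1 q hq
    · exact lt_of_mem_primeFactors_of_coprime_primorial htr hq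
  have hRt : Rn n < (Q - r) * t := by
    refine Nat.lt_of_mul_lt_mul_left (a := ∏ q ∈ n.primeFactors, (q - r)) ?_
    calc (∏ q ∈ n.primeFactors, (q - r)) * Rn n = S r n := by rw [S_eq_Rn_mul hn, mul_comm]
      _ < S r ((∏ q ∈ A, q) * t) := h.2 _ hnm hSm
      _ ≤ S r (∏ q ∈ A, q) * t := S_mul_le hA0 ht0
      _ = (∏ q ∈ n.primeFactors, (q - r)) * ((Q - r) * t) := by
        rw [S_prod_primes hA, prod_insert hQn]; ring
  exact mul_lt_of_lt_mul_of_le_div_add hrQ.le hRt (by omega)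

theorem SST.mul_pow_factorization_lt {r n : ℕ} (h : SST r n) (hn : 1 < n) :
    r * Pk 1 n ^ (n.factorization (Pk 1 n) - 1) < 4 * J (primorial r) * Pk 1 n ^ 2 := by
  have hn0 : n ≠ 0 := by omega
  have hPmem := Pk_one_mem_primeFactors hn
  set P := Pk 1 n
  obtain ⟨Q, hQ, hPQ, hQP⟩ :=
    Nat.exists_prime_lt_and_le_two_mul P (Nat.prime_of_mem_primeFactors hPmem).ne_zero
  have hQn : Q ∉ n.primeFactors := fun hQn =>
    (le_max' _ Q hQn).not_gt (Pk_one_eq_max' hn ▸ hPQ)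
  have hrP : r < P := S_pos_iff.1 h.1 P hPmem
  have hRn0 : Rn n ≠ 0 := fun h0 => hn0 (by rw [← Rn_mul_prod_primeFactors n, h0, zero_mul])
  calc r * P ^ (n.factorization P - 1) ≤ r * Rn n :=
        Nat.mul_le_mul_left r (Nat.le_of_dvd (Nat.pos_of_ne_zero hRn0)
          (pow_factorization_sub_one_dvd_Rn hn0 hPmem))
    _ < (Q - r) * J (primorial r) * Q := h.mul_Rn_lt hn0 hQ (by omega) hQn
    _ ≤ (2 * P) * J (primorial r) * (2 * P) := by gcongr; omega
    _ = 4 * J (primorial r) * P ^ 2 := by ring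

theorem stmt17_general (r n : ℕ) (hr : 0 < r) (hn : 1 < n)
    (h : SST r n) :
    ((Pk 1 n : ℝ) ^ (n.factorization (Pk 1 n) - 1) <
      4 * ((J (primorial r) : ℝ) / r) * (Pk 1 n : ℝ) ^ 2) ∧
    ((Pk 1 n) ^ 4 ∣ n → (Pk 1 n : ℝ) < 4 * (J (primorial r) : ℝ) / r) := by
  have key := h.mul_pow_factorization_lt hn
  have hP := Nat.prime_of_mem_primeFactors (Pk_one_mem_primeFactors hn)
  set P := Pk 1 n
  have hr' : (0 : ℝ) < r := by exact_mod_cast hr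
  refine ⟨?_, fun hdvd => ?_⟩
  · rw [mul_div_assoc', div_mul_eq_mul_div, lt_div_iff₀ hr', mul_comm]
    exact_mod_cast key
  · have h4 : 4 ≤ n.factorization P := (hP.pow_dvd_iff_le_factorization (by omega)).1 hdvd
    have h3 : r * P * P ^ 2 < 4 * J (primorial r) * P ^ 2 := calc
      r * P * P ^ 2 = r * P ^ 3 := by ring
      _ ≤ r * P ^ (n.factorization P - 1) := by
        gcongr
        exacts [hP.one_le, by omega]
      _ < _ := key
    rw [lt_div_iff₀ hr', mul_comm]
    exact_mod_cast Nat.lt_of_mul_lt_mul_right h3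

theorem stmt17 (r n : ℕ) (hr : 0 < r) (hn : 1 < n) (hB : 0 < S r n)
    (h : SST r n) :
    ((Pk 1 n : ℝ) ^ (n.factorization (Pk 1 n) - 1) <
      4 * ((J (primorial r) : ℝ) / r) * (Pk 1 n : ℝ) ^ 2) ∧
    ((Pk 1 n) ^ 4 ∣ n → (Pk 1 n : ℝ) < 4 * (J (primorial r) : ℝ) / r) :=
  stmt17_general r n hr hn h
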